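/- arXiv:2305.08756 — 4 statements merged into one kernel-verified Lean document; each statement's English description precedes it below -/
import Mathlib

section
/- Let a and λ be nonzero complex numbers and set c = 2a/λ². Define χ(Z) = Z₀·Z₃ - Z₁·Z₂ + √2·a·Z₂·Z₃ and χ'(Z) = (√2/c)·(Z₀·Z₁ + (c²/2)·Z₂·Z₃) for Z ∈ ℂ⁴. Let T be the 4×4 complex matrix with rows (λ, 0, 0, 0), (0, λ, 0, 0), (-λ/(a√2), 0, 1/λ, 0), (0, λ/(a√2), 0, 1/λ). Then for all Z ∈ ℂ⁴, χ(T·Z) = χ'(Z). -/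
/-!
Both sides reduce to the normal form `λ²/(a√2) Z₀Z₁ + √2 a/λ² Z₂Z₃`. On the Kerr side the
substitution `W = T Z` makes the `Z₀Z₃`, `Z₁Z₂` terms of `W₀W₃ - W₁W₂` cancel against those of
`√2 a W₂W₃`, for any nonzero value in place of `√2`; on the Plebański–Demiański side
`c = 2a/λ²` gives `√2/c = √2 λ²/(2a)`, which is `λ²/(a√2)` exactly because `√2² = 2`.
-/

open Matrix

section

variable {K : Type*} [Field K]

-- Throughout, `s` stands for `√2`.

def kerrQuadratic (s a : K) (W : Fin 4 → K) : K :=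
  W 0 * W 3 - W 1 * W 2 + s * a * W 2 * W 3

def plebanskiDemianskiQuadratic (s c : K) (Z : Fin 4 → K) : K :=
  s / c * (Z 0 * Z 1 + c ^ 2 / 2 * Z 2 * Z 3)

def kerrToPDMatrix (s a lam : K) : Matrix (Fin 4) (Fin 4) K :=
  !![lam, 0, 0, 0;
     0, lam, 0, 0;
     -(lam / (a * s)), 0, 1 / lam, 0;
     0, lam / (a * s), 0, 1 / lam]

theorem kerrToPDMatrix_mulVec (s a lam : K) (Z : Fin 4 → K) :
    kerrToPDMatrix s a lam *ᵥ Z =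
      ![lam * Z 0, lam * Z 1, Z 2 / lam - lam / (a * s) * Z 0, Z 3 / lam + lam / (a * s) * Z 1] := by
  ext i
  fin_cases i <;> simp [kerrToPDMatrix, mulVec, dotProduct, Fin.sum_univ_four] <;> ring

theorem kerrQuadratic_kerrToPDMatrix_mulVec {s a lam : K} (hs : s ≠ 0) (ha : a ≠ 0)
    (hlam : lam ≠ 0) (Z : Fin 4 → K) :
    kerrQuadratic s a (kerrToPDMatrix s a lam *ᵥ Z) =
      lam ^ 2 / (a * s) * (Z 0 * Z 1) + s * a / lam ^ 2 * (Z 2 * Z 3) := by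
  rw [kerrToPDMatrix_mulVec, kerrQuadratic]
  simp only [cons_val]
  field_simp
  ring

theorem plebanskiDemianskiQuadratic_eq {s a lam : K} (hs : s ≠ 0) (hs2 : s ^ 2 = 2) (ha : a ≠ 0)
    (hlam : lam ≠ 0) (Z : Fin 4 → K) :
    plebanskiDemianskiQuadratic s (2 * a / lam ^ 2) Z =
      lam ^ 2 / (a * s) * (Z 0 * Z 1) + s * a / lam ^ 2 * (Z 2 * Z 3) := by
  have h2 : (2 : K) ≠ 0 := hs2 ▸ pow_ne_zero 2 hs
  rw [plebanskiDemianskiQuadratic]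
  field_simp
  linear_combination (lam ^ 4 * Z 0 * Z 1) * hs2

end

theorem kerr_to_PD_quadratic (a lam : ℂ) (ha : a ≠ 0) (hlam : lam ≠ 0)
    (c : ℂ) (hc : c = 2 * a / lam^2)
    (T : Matrix (Fin 4) (Fin 4) ℂ)
    (hT : T = !![lam, 0, 0, 0;
                 0, lam, 0, 0;
                 -(lam / (a * (Real.sqrt 2 : ℂ))), 0, 1/lam, 0;
                 0, lam / (a * (Real.sqrt 2 : ℂ)), 0, 1/lam]) :
    ∀ Z : Fin 4 → ℂ,
      (T.mulVec Z) 0 * (T.mulVec Z) 3 - (T.mulVec Z) 1 * (T.mulVec Z) 2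
          + (Real.sqrt 2 : ℂ) * a * (T.mulVec Z) 2 * (T.mulVec Z) 3 =
        ((Real.sqrt 2 : ℂ) / c) * (Z 0 * Z 1 + (c^2 / 2) * Z 2 * Z 3) := by
  intro Z
  have hs : ((Real.sqrt 2 : ℝ) : ℂ) ≠ 0 := by simp
  have hs2 : ((Real.sqrt 2 : ℝ) : ℂ) ^ 2 = 2 := by norm_cast; simp
  have hT' : T = kerrToPDMatrix (Real.sqrt 2 : ℂ) a lam := hT
  subst hT' hc
  exact (kerrQuadratic_kerrToPDMatrix_mulVec hs ha hlam Z).trans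
    (plebanskiDemianskiQuadratic_eq hs hs2 ha hlam Z).symm
end

section
/- Let a, b be nonzero real numbers, set c = a + i·b ∈ ℂ, and let t, x, y, z be real numbers. Let Q = t² - x² - y² - z² (as a complex number). Then (Q - c²)² - 4c²·(x² + y²) = 0 if and only if z² - t² = b² and x² + y² = a². (Singularity locus of the linearized Plebański–Demiański field: two accelerating ring singularities.) -/
theorem PD_singularity_locus (a b t x y z : ℝ) (ha : a ≠ 0) (hb : b ≠ 0) :
    (((t : ℂ)^2 - (x : ℂ)^2 - (y : ℂ)^2 - (z : ℂ)^2) - ((a : ℂ) + Complex.I * (b : ℂ))^2)^2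
        - 4 * ((a : ℂ) + Complex.I * (b : ℂ))^2 * ((x : ℂ)^2 + (y : ℂ)^2) = 0 ↔
      z^2 - t^2 = b^2 ∧ x^2 + y^2 = a^2 := by
  have h2 : (Complex.I)^2 = -1 := Complex.I_sq
  have key : (((t : ℂ)^2 - (x : ℂ)^2 - (y : ℂ)^2 - (z : ℂ)^2) - ((a : ℂ) + Complex.I * (b : ℂ))^2)^2
        - 4 * ((a : ℂ) + Complex.I * (b : ℂ))^2 * ((x : ℂ)^2 + (y : ℂ)^2)
      = (((t^2-x^2-y^2-z^2-(a^2-b^2))^2 - 4*a^2*b^2 - 4*(a^2-b^2)*(x^2+y^2) : ℝ) : ℂ)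
        + Complex.I * (((-4*a*b*(t^2-x^2-y^2-z^2-(a^2-b^2)) - 8*a*b*(x^2+y^2) : ℝ)) : ℂ) := by
    push_cast
    linear_combination ((4*(a:ℂ)^2*b^2 - 2*(b:ℂ)^2*((t:ℂ)^2-x^2-y^2-z^2-a^2)
      - 4*(b:ℂ)^2*((x:ℂ)^2+y^2) - (b:ℂ)^4) + 4*(a:ℂ)*b^3*Complex.I + (b:ℂ)^4*Complex.I^2) * h2
  rw [key]
  constructor
  · intro h
    have hre : (t^2-x^2-y^2-z^2-(a^2-b^2))^2 - 4*a^2*b^2 - 4*(a^2-b^2)*(x^2+y^2) = 0 := by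
      have := congrArg Complex.re h
      simpa only [Complex.add_re, Complex.mul_re, Complex.ofReal_re, Complex.ofReal_im,
        Complex.I_re, Complex.I_im, Complex.zero_re, one_mul, zero_mul, mul_zero,
        sub_zero, zero_sub, add_zero, neg_zero] using this
    have him : -4*a*b*(t^2-x^2-y^2-z^2-(a^2-b^2)) - 8*a*b*(x^2+y^2) = 0 := by
      have := congrArg Complex.im h
      simpa only [Complex.add_im, Complex.mul_im, Complex.ofReal_re, Complex.ofReal_im,
        Complex.I_re, Complex.I_im, Complex.zero_im, one_mul, zero_mul, mul_zero,
        sub_zero, zero_sub, add_zero, zero_add, neg_zero] using this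
    have hab : a * b ≠ 0 := mul_ne_zero ha hb
    have hu : t^2-x^2-y^2-z^2-(a^2-b^2) + 2*(x^2+y^2) = 0 := by
      have h4 : (-4*(a*b)) * (t^2-x^2-y^2-z^2-(a^2-b^2) + 2*(x^2+y^2)) = 0 := by
        linear_combination him
      rcases mul_eq_zero.mp h4 with h5 | h5
      · exact absurd (by linarith : a*b = 0) hab
      · exact h5
    have hρ : x^2 + y^2 = a^2 := by
      have hfac : 4*((x^2+y^2) - a^2)*((x^2+y^2) + b^2) = 0 := by
        linear_combination hre + (4*(x^2+y^2) - (t^2-x^2-y^2-z^2-(a^2-b^2)+2*(x^2+y^2)))*hu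
      have hpos : (x^2+y^2) + b^2 > 0 := by positivity
      rcases mul_eq_zero.mp hfac with h5 | h5
      · nlinarith
      · linarith
    exact ⟨by linear_combination hρ - hu, hρ⟩
  · rintro ⟨h1, h3⟩
    have hre : (t^2-x^2-y^2-z^2-(a^2-b^2))^2 - 4*a^2*b^2 - 4*(a^2-b^2)*(x^2+y^2) = 0 := by
      linear_combination (-(t^2+x^2+y^2-z^2-a^2+b^2 - 4*(x^2+y^2)))*h1
        + ((t^2+x^2+y^2-z^2-a^2+b^2 - 4*(x^2+y^2)) + 4*((x^2+y^2)+b^2))*h3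
    have him : -4*a*b*(t^2-x^2-y^2-z^2-(a^2-b^2)) - 8*a*b*(x^2+y^2) = 0 := by
      linear_combination (4*a*b)*h1 + (-4*a*b)*h3
    rw [hre, him]
    simp
end

section
/- Let α be a nonzero real number, set c = i/α ∈ ℂ, and let t, x, y, z be real numbers. Let Q = t² - x² - y² - z². Then (Q - c²)² - 4c²·(x² + y²) = 0 if and only if x = 0, y = 0, and z² - t² = 1/α². (Singularity locus of the linearized C-metric field: two accelerating point singularities.) -/
theorem C_metric_singularity_locus (α t x y z : ℝ) (hα : α ≠ 0) :
    (((t : ℂ)^2 - (x : ℂ)^2 - (y : ℂ)^2 - (z : ℂ)^2) - (Complex.I / (α : ℂ))^2)^2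
        - 4 * (Complex.I / (α : ℂ))^2 * ((x : ℂ)^2 + (y : ℂ)^2) = 0 ↔
      x = 0 ∧ y = 0 ∧ z^2 - t^2 = 1 / α^2 := by
  have hα' : (α : ℂ) ≠ 0 := by exact_mod_cast hα
  have hc : (Complex.I / (α : ℂ))^2 = ((-(1/α^2) : ℝ) : ℂ) := by
    rw [div_pow, Complex.I_sq]
    push_cast
    field_simp
  rw [hc]
  have key : (((t : ℂ)^2 - (x : ℂ)^2 - (y : ℂ)^2 - (z : ℂ)^2) - ((-(1/α^2) : ℝ) : ℂ))^2
        - 4 * ((-(1/α^2) : ℝ) : ℂ) * ((x : ℂ)^2 + (y : ℂ)^2)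
      = ((((t^2 - x^2 - y^2 - z^2) + 1/α^2)^2 + 4/α^2 * (x^2 + y^2) : ℝ) : ℂ) := by
    push_cast
    ring
  rw [key, Complex.ofReal_eq_zero]
  constructor
  · intro h
    have h1 : ((t^2 - x^2 - y^2 - z^2) + 1/α^2)^2 = 0 ∧ 4/α^2 * (x^2 + y^2) = 0 := by
      constructor <;> nlinarith [sq_nonneg ((t^2 - x^2 - y^2 - z^2) + 1/α^2),
        mul_nonneg (by positivity : (0:ℝ) ≤ 4/α^2) (by positivity : (0:ℝ) ≤ x^2 + y^2),
        sq_nonneg x, sq_nonneg y]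
    have hxy : x^2 + y^2 = 0 := by
      have h4 : (4:ℝ)/α^2 ≠ 0 := by positivity
      exact (mul_eq_zero.mp h1.2).resolve_left h4
    have hx : x = 0 := by nlinarith [sq_nonneg x, sq_nonneg y]
    have hy : y = 0 := by nlinarith [sq_nonneg x, sq_nonneg y]
    refine ⟨hx, hy, ?_⟩
    have h0 : t^2 - x^2 - y^2 - z^2 + 1/α^2 = 0 := by
      exact pow_eq_zero_iff (n := 2) (by norm_num) |>.mp h1.1
    subst hx; subst hy
    simp only [ne_eq, OfNat.ofNat_ne_zero, not_false_eq_true, zero_pow, sub_zero] at h0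
    linarith
  · rintro ⟨hx, hy, hz⟩
    subst hx hy
    have hQ : t^2 - 0^2 - 0^2 - z^2 + 1/α^2 = 0 := by linarith
    rw [hQ]
    norm_num
end

section
/- Let a be a nonzero real number and x, y, z real numbers, and set A = (x + i·y)/√2, B = (z - i·a)/√2, C = -(x - i·y)/√2 as complex numbers. Then B² - A·C = (x² + y² + (z - i·a)²)/2, and B² - A·C = 0 if and only if z = 0 and x² + y² = a². (The singularity of the linearized Kerr field is a ring.) -/
/-!
Clearing the common factor `√2` turns `B² - A·C` into `(x² + y² + (z - i a)²) / 2`, whose real part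
is `(x² + y² + z² - a²) / 2` and whose imaginary part is `-a z`. It vanishes iff `a z = 0` and
`x² + y² + z² = a²`, and either alternative `z = 0` or `a = 0` leads to `z = 0` and `x² + y² = a²`.
-/

open Complex

lemma sq_div_sub_div_mul_neg_div {K : Type*} [Field K] (u v w s : K) :
    (w / s) ^ 2 - u / s * -(v / s) = (w ^ 2 + u * v) / s ^ 2 := by
  ring

lemma Complex.ofReal_sqrt_two_sq : ((Real.sqrt 2 : ℝ) : ℂ) ^ 2 = 2 := by
  rw [← ofReal_pow, Real.sq_sqrt zero_le_two, ofReal_ofNat]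

lemma Complex.add_I_mul_mul_sub_I_mul (x y : ℝ) :
    ((x : ℂ) + I * y) * (x - I * y) = x ^ 2 + y ^ 2 := by
  linear_combination (-(y : ℂ) ^ 2) * I_sq

lemma Real.sq_add_sq_add_sq_eq_and_mul_eq_zero_iff (x y z a : ℝ) :
    x ^ 2 + y ^ 2 + z ^ 2 = a ^ 2 ∧ z * a = 0 ↔ z = 0 ∧ x ^ 2 + y ^ 2 = a ^ 2 := by
  constructor
  · rintro ⟨h, hza⟩
    have hz : z = 0 := by
      rcases mul_eq_zero.1 hza with hz | rfl
      · exact hz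
      · exact pow_eq_zero_iff two_ne_zero |>.1 (by nlinarith [sq_nonneg x, sq_nonneg y])
    subst hz
    exact ⟨rfl, by simpa using h⟩
  · rintro ⟨rfl, h⟩
    simp [h]

lemma Complex.sq_add_sq_add_sub_I_mul_sq_eq_zero_iff (x y z a : ℝ) :
    (x : ℂ) ^ 2 + y ^ 2 + (z - I * a) ^ 2 = 0 ↔ z = 0 ∧ x ^ 2 + y ^ 2 = a ^ 2 := by
  rw [← Real.sq_add_sq_add_sq_eq_and_mul_eq_zero_iff, Complex.ext_iff]
  simp only [add_re, add_im, sub_re, sub_im, pow_two, mul_re, mul_im, ofReal_re, ofReal_im,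
    I_re, I_im, zero_re, zero_im]
  constructor <;> rintro ⟨hre, him⟩ <;> constructor <;> linarith

lemma kerr_discriminant_eq (a x y z : ℝ) :
    (((z : ℂ) - I * a) / (Real.sqrt 2 : ℂ)) ^ 2
        - ((x : ℂ) + I * y) / (Real.sqrt 2 : ℂ) * (-(((x : ℂ) - I * y) / (Real.sqrt 2 : ℂ)))
      = ((x : ℂ) ^ 2 + (y : ℂ) ^ 2 + ((z : ℂ) - I * a) ^ 2) / 2 := by
  rw [sq_div_sub_div_mul_neg_div, add_I_mul_mul_sub_I_mul, ofReal_sqrt_two_sq]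
  ring

theorem kerr_discriminant_general (a x y z : ℝ) :
    ((((z : ℂ) - Complex.I * (a : ℂ)) / (Real.sqrt 2 : ℂ))^2
        - (((x : ℂ) + Complex.I * (y : ℂ)) / (Real.sqrt 2 : ℂ))
          * (-(((x : ℂ) - Complex.I * (y : ℂ)) / (Real.sqrt 2 : ℂ)))
      = ((x : ℂ)^2 + (y : ℂ)^2 + ((z : ℂ) - Complex.I * (a : ℂ))^2) / 2) ∧
    (((((z : ℂ) - Complex.I * (a : ℂ)) / (Real.sqrt 2 : ℂ))^2
        - (((x : ℂ) + Complex.I * (y : ℂ)) / (Real.sqrt 2 : ℂ))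
          * (-(((x : ℂ) - Complex.I * (y : ℂ)) / (Real.sqrt 2 : ℂ))) = 0) ↔
      z = 0 ∧ x^2 + y^2 = a^2) := by
  refine ⟨kerr_discriminant_eq a x y z, ?_⟩
  rw [kerr_discriminant_eq, div_eq_zero_iff, or_iff_left two_ne_zero,
    sq_add_sq_add_sub_I_mul_sq_eq_zero_iff]

theorem kerr_discriminant (a x y z : ℝ) (ha : a ≠ 0) :
    ((((z : ℂ) - Complex.I * (a : ℂ)) / (Real.sqrt 2 : ℂ))^2
        - (((x : ℂ) + Complex.I * (y : ℂ)) / (Real.sqrt 2 : ℂ))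
          * (-(((x : ℂ) - Complex.I * (y : ℂ)) / (Real.sqrt 2 : ℂ)))
      = ((x : ℂ)^2 + (y : ℂ)^2 + ((z : ℂ) - Complex.I * (a : ℂ))^2) / 2) ∧
    (((((z : ℂ) - Complex.I * (a : ℂ)) / (Real.sqrt 2 : ℂ))^2
        - (((x : ℂ) + Complex.I * (y : ℂ)) / (Real.sqrt 2 : ℂ))
          * (-(((x : ℂ) - Complex.I * (y : ℂ)) / (Real.sqrt 2 : ℂ))) = 0) ↔
      z = 0 ∧ x^2 + y^2 = a^2) :=
  kerr_discriminant_general a x y z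
end
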